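/- arXiv:1312.2946 — 3 statements merged into one kernel-verified Lean document; each statement's English description precedes it below -/
import Mathlib

section
/- Let 𝒢=(V,E,c,∂V) be a finite weighted graph with boundary such that (V,E) is connected and ∂V is nonempty, and let G=Δ⁻¹ be the Green function. Let (Γ_v)_{v∈V°} be a square-integrable random vector on a probability space with E[Γ_v]=0 for all v and E[Γ_u Γ_v] = G(u,v) for all u,v ∈ V° (for instance the discrete Gaussian free field with wired boundary conditions). Define the current flow J = dΓ ∈ Ω¹ (with Γ extended by 0 on ∂V). Then for every 1-form α ∈ Ω¹, E[⟨J, α⟩²] = ⟨α, Pα⟩, where P = d∘G∘d* and ⟨·,·⟩ is the weighted inner product on Ω¹; that is, the covariance of the current flow of the discrete Gaussian free field is given by the transfer current operator. -/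
/-
Writing `b = d*α`, summation by parts turns `⟨dΓ, α⟩` into the linear statistic `⟨Γ, b⟩` of the
field, whose second moment is the quadratic form `⟨b, G b⟩` of its covariance. Summation by parts
backwards identifies that form with `⟨α, d G d* α⟩`.
-/

open Finset

variable {V : Type*} [Fintype V] [DecidableEq V]

/-- Inner product on `Ω⁰`, the space of functions on interior vertices
(functions on `V` vanishing on the boundary `B`). -/
noncomputable def inner0 (B : Finset V) (f g : V → ℝ) : ℝ :=
  ∑ v ∈ Finset.univ.filter (fun v => v ∉ B), f v * g v

/-- Weighted inner product on `Ω¹`: `⟨α,β⟩ = (1/2) ∑_{e ∈ E^±} c(e) α(e) β(e)`. -/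
noncomputable def inner1 (c : V → V → ℝ) (a b : V → V → ℝ) : ℝ :=
  (1 / 2) * ∑ x : V, ∑ y : V, c x y * a x y * b x y

/-- `f` belongs to `Ω⁰`: it vanishes on the boundary. -/
def isForm0 (B : Finset V) (f : V → ℝ) : Prop := ∀ v ∈ B, f v = 0

/-- `a` belongs to `Ω¹`: it is antisymmetric and supported on directed edges. -/
def isForm1 (G : SimpleGraph V) (a : V → V → ℝ) : Prop :=
  (∀ x y, a y x = - a x y) ∧ (∀ x y, ¬ G.Adj x y → a x y = 0)

/-- The differential `d : Ω⁰ → Ω¹`, `df(xy) = f(y) − f(x)` on edges. -/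
noncomputable def dd (G : SimpleGraph V) [DecidableRel G.Adj] (f : V → ℝ) : V → V → ℝ :=
  fun x y => if G.Adj x y then f y - f x else 0

/-- The codifferential `d* : Ω¹ → Ω⁰`, `d*α(v) = ∑_{v' ∼ v} c(v'v) α(v'v)`
for interior `v` (and `0` on the boundary). -/
noncomputable def dStar (G : SimpleGraph V) [DecidableRel G.Adj] (c : V → V → ℝ) (B : Finset V)
    (a : V → V → ℝ) : V → ℝ :=
  fun v => if v ∈ B then 0 else ∑ w : V, if G.Adj w v then c w v * a w v else 0

/-- The Laplacian `Δ = d*d`, `Δf(v) = ∑_{v' ∼ v} c(vv')(f(v) − f(v'))` for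
interior `v` (and `0` on the boundary). -/
noncomputable def lap (G : SimpleGraph V) [DecidableRel G.Adj] (c : V → V → ℝ) (B : Finset V)
    (f : V → ℝ) : V → ℝ :=
  fun v => if v ∈ B then 0 else ∑ w : V, if G.Adj v w then c v w * (f v - f w) else 0

open MeasureTheory

lemma sum_sum_antisymm_mul_sub {ι : Type*} [Fintype ι] (S : ι → ι → ℝ)
    (hS : ∀ x y, S y x = -S x y) (f : ι → ℝ) :
    ∑ x, ∑ y, S x y * (f y - f x) = 2 * ∑ x, ∑ y, S x y * f y := by
  have hswap : ∑ x, ∑ y, S x y * f x = -∑ x, ∑ y, S x y * f y := by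
    rw [sum_comm, ← sum_neg_distrib]
    exact sum_congr rfl fun y _ => by
      rw [← sum_neg_distrib]
      exact sum_congr rfl fun x _ => by rw [hS, neg_mul]
  simp only [mul_sub, sum_sub_distrib, hswap]
  ring

lemma integral_sq_sum_mul {ι Ω : Type*} [MeasurableSpace Ω] {μ : Measure Ω} (s : Finset ι)
    (X : Ω → ι → ℝ) (hX : ∀ i, MemLp (fun ω => X ω i) 2 μ) (b : ι → ℝ) :
    ∫ ω, (∑ i ∈ s, X ω i * b i) ^ 2 ∂μ =
      ∑ i ∈ s, ∑ j ∈ s, b i * b j * ∫ ω, X ω i * X ω j ∂μ := by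
  have hint : ∀ i j, Integrable (fun ω => b i * b j * (X ω i * X ω j)) μ := fun i j =>
    ((hX i).integrable_mul (hX j)).const_mul _
  have hexpand : ∀ ω, (∑ i ∈ s, X ω i * b i) ^ 2 =
      ∑ i ∈ s, ∑ j ∈ s, b i * b j * (X ω i * X ω j) := fun ω => by
    rw [sq, sum_mul_sum]
    exact sum_congr rfl fun i _ => sum_congr rfl fun j _ => by ring
  simp only [hexpand]
  rw [integral_finsetSum _ fun i _ => integrable_finsetSum _ fun j _ => hint i j]
  refine sum_congr rfl fun i _ => ?_
  rw [integral_finsetSum _ fun j _ => hint i j]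
  exact sum_congr rfl fun j _ => integral_const_mul _ _

omit [DecidableEq V] in
lemma inner1_comm (c a b : V → V → ℝ) : inner1 c a b = inner1 c b a := by
  simp only [inner1, mul_right_comm _ (a _ _)]

lemma inner1_dd_eq_inner0_dStar (G : SimpleGraph V) [DecidableRel G.Adj] {c : V → V → ℝ}
    (hc : ∀ x y, c x y = c y x) {B : Finset V} {f : V → ℝ} (hf : isForm0 B f)
    {a : V → V → ℝ} (ha : ∀ x y, a y x = -a x y) :
    inner1 c (dd G f) a = inner0 B f (dStar G c B a) := by
  set S : V → V → ℝ := fun x y => if G.Adj x y then c x y * a x y else 0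
  have hS : ∀ x y, S y x = -S x y := fun x y => by
    by_cases h : G.Adj x y
    · simp [S, h, h.symm, hc x y, ha x y]
    · have h' : ¬ G.Adj y x := fun h' => h h'.symm
      simp [S, h, h']
  have hterm : ∀ x y, c x y * dd G f x y * a x y = S x y * (f y - f x) := fun x y => by
    by_cases h : G.Adj x y <;> simp [S, dd, h]; ring
  calc inner1 c (dd G f) a = ∑ y, (∑ x, S x y) * f y := by
        rw [inner1]
        simp only [hterm]
        rw [sum_sum_antisymm_mul_sub S hS, sum_comm]
        simp only [sum_mul]
        ring
    _ = inner0 B f (dStar G c B a) := by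
        rw [inner0, sum_filter]
        refine sum_congr rfl fun v _ => ?_
        by_cases hv : v ∈ B
        · simp [hv, hf v hv]
        · simp [hv, dStar, S, mul_comm]

theorem dgff_current_flow_covariance_general
    (G : SimpleGraph V) [DecidableRel G.Adj]
    (c : V → V → ℝ)
    (hc_symm : ∀ x y, c x y = c y x)
    (B : Finset V)
    -- `Gk` is the Green kernel: vanishing at boundary vertices and inverting
    -- the Laplacian
    (Gk : V → V → ℝ)
    (hGk_bdry : ∀ u v, u ∈ B ∨ v ∈ B → Gk u v = 0)
    -- the random field `Γ` on a probability space, extended by `0` on the boundary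
    {Ω : Type*} [MeasureSpace Ω]
    (Γ : Ω → V → ℝ)
    (hL2 : ∀ v, MemLp (fun ω => Γ ω v) 2)
    (hbdry : ∀ ω, ∀ v ∈ B, Γ ω v = 0)
    (hcov : ∀ u v, u ∉ B → v ∉ B → (∫ ω, Γ ω u * Γ ω v) = Gk u v)
    -- the 1-form `α`
    (a : V → V → ℝ) (ha : isForm1 G a) :
    (∫ ω, (inner1 c (dd G (Γ ω)) a) ^ 2) =
      inner1 c a (dd G (fun z => ∑ w : V, Gk z w * dStar G c B a w)) := by
  set b := dStar G c B a
  set I := univ.filter (fun v => v ∉ B)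
  have hGb : isForm0 B (fun z => ∑ w, Gk z w * b w) := fun v hv =>
    sum_eq_zero fun w _ => by rw [hGk_bdry v w (.inl hv), zero_mul]
  have hGb_interior : ∀ u, ∑ w, Gk u w * b w = ∑ w ∈ I, Gk u w * b w := fun u => by
    rw [sum_filter]
    exact sum_congr rfl fun w _ => by by_cases hw : w ∈ B <;> simp [hw, b, dStar]
  calc (∫ ω, (inner1 c (dd G (Γ ω)) a) ^ 2)
      = ∫ ω, (∑ v ∈ I, Γ ω v * b v) ^ 2 := by
        simp only [inner1_dd_eq_inner0_dStar G hc_symm (hbdry _) ha.1, inner0]; rfl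
    _ = ∑ u ∈ I, ∑ v ∈ I, b u * b v * Gk u v :=
        (integral_sq_sum_mul I Γ hL2 b).trans <| sum_congr rfl fun u hu => sum_congr rfl
          fun v hv => by rw [hcov u v (mem_filter.1 hu).2 (mem_filter.1 hv).2]
    _ = inner1 c a (dd G (fun z => ∑ w, Gk z w * b w)) := by
        rw [inner1_comm, inner1_dd_eq_inner0_dStar G hc_symm hGb ha.1, inner0]
        simp only [hGb_interior, sum_mul]
        exact sum_congr rfl fun u _ => sum_congr rfl fun v _ => by ring

/-- The covariance of the current flow of the discrete Gaussian
free field is given by the transfer current operator `P = d ∘ G ∘ d*`. -/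
theorem dgff_current_flow_covariance
    (G : SimpleGraph V) [DecidableRel G.Adj]
    (c : V → V → ℝ)
    (hc_symm : ∀ x y, c x y = c y x)
    (hc_pos : ∀ x y, G.Adj x y → 0 < c x y)
    (B : Finset V)
    (hconn : G.Connected) (hB : B.Nonempty)
    -- `Gk` is the Green kernel: vanishing at boundary vertices and inverting
    -- the Laplacian
    (Gk : V → V → ℝ)
    (hGk_bdry : ∀ u v, u ∈ B ∨ v ∈ B → Gk u v = 0)
    (hGk_green : ∀ u, u ∉ B →
      lap G c B (fun v => Gk u v) = fun v => if v = u then 1 else 0)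
    -- the random field `Γ` on a probability space, extended by `0` on the boundary
    {Ω : Type*} [MeasureSpace Ω] [IsProbabilityMeasure (volume : Measure Ω)]
    (Γ : Ω → V → ℝ)
    (hL2 : ∀ v, MemLp (fun ω => Γ ω v) 2)
    (hbdry : ∀ ω, ∀ v ∈ B, Γ ω v = 0)
    (hmean : ∀ v, (∫ ω, Γ ω v) = 0)
    (hcov : ∀ u v, u ∉ B → v ∉ B → (∫ ω, Γ ω u * Γ ω v) = Gk u v)
    -- the 1-form `α`
    (a : V → V → ℝ) (ha : isForm1 G a) :
    (∫ ω, (inner1 c (dd G (Γ ω)) a) ^ 2) =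
      inner1 c a (dd G (fun z => ∑ w : V, Gk z w * dStar G c B a w)) :=
  dgff_current_flow_covariance_general G c hc_symm B Gk hGk_bdry Γ hL2 hbdry hcov a ha
end

section
/- Let Ω be a finite set and let μ be a determinantal probability measure on the subsets of Ω with kernel K. Then for every subset A ⊆ Ω and every real number z, the probability generating function of the number of points in A satisfies E_μ[z^{|𝒯∩A|}] = det(z·K_A + I_A − K_A), where K_A is the principal submatrix of K indexed by A and I_A the identity matrix indexed by A. -/
/-!
Writing `z = (z - 1) + 1` gives `z ^ |T ∩ A| = ∑_{S ⊆ T ∩ A} (z - 1) ^ |S|`; exchanging the sums,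
`E[z ^ |𝒯 ∩ A|] = ∑_{S ⊆ A} (z - 1) ^ |S| μ{T ⊇ S} = ∑_{S ⊆ A} (z - 1) ^ |S| det K_S`.
By multilinearity of the determinant in its rows, this is the principal-minor expansion of
`det (I_A + (z - 1) K_A)`.
-/

open Finset

variable {α : Type*} [Fintype α] [DecidableEq α]

/-- The determinant of the principal submatrix of `K` with rows and columns
indexed by the finite set `S`. -/
noncomputable def detSub (K : Matrix α α ℝ) (S : Finset α) : ℝ :=
  Matrix.det (K.submatrix (fun i : {x : α // x ∈ S} => (i : α))
    (fun j : {x : α // x ∈ S} => (j : α)))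

/-- `μ` is a probability measure on the power set of `α`. -/
def IsProbMeasure (μ : Finset α → ℝ) : Prop :=
  (∀ T, 0 ≤ μ T) ∧ (∑ T : Finset α, μ T) = 1

/-- `μ` is determinantal with kernel `K`:
`μ {T : S ⊆ T} = det K_S` for every `S ⊆ Ω`. -/
def IsDeterminantal (μ : Finset α → ℝ) (K : Matrix α α ℝ) : Prop :=
  ∀ S : Finset α, (∑ T : Finset α, if S ⊆ T then μ T else 0) = detSub K S

theorem Finset.pow_card_eq_sum_powerset {R : Type*} [CommRing R] {ι : Type*} (z : R)
    (P : Finset ι) : z ^ #P = ∑ S ∈ P.powerset, (z - 1) ^ #S := by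
  simpa using prod_add_one (f := fun _ : ι ↦ z - 1) P

theorem Finset.sum_powerset_eq_sum_map_subtype {ι β : Type*} [AddCommMonoid β] (A : Finset ι)
    (f : Finset ι → β) :
    ∑ S ∈ A.powerset, f S = ∑ s : Finset A, f (s.map (.subtype (· ∈ A))) := by
  classical
  have hA : univ.map (mapEmbedding (.subtype (· ∈ A))).toEmbedding = A.powerset := by
    ext S
    simp only [mem_map, mem_univ, true_and, mem_powerset]
    constructor
    · rintro ⟨s, rfl⟩ a ha
      exact property_of_mem_map_subtype s ha
    · exact fun hS ↦ ⟨S.subtype (· ∈ A), subtype_map_of_mem hS⟩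
  rw [← hA, sum_map]
  rfl

namespace Matrix

variable {n R : Type*} [Fintype n] [DecidableEq n] [CommRing R]

theorem det_one_add_eq_sum_det_submatrix (M : Matrix n n R) :
    det (1 + M) = ∑ s : Finset n, (M.submatrix (↑) (↑) : Matrix s s R).det := by
  rw [add_comm]
  exact (detRowAlternating.map_add_univ M.row (1 : Matrix n n R).row).trans
    (Finset.sum_congr rfl fun s _ ↦ det_piecewise_one_eq_submatrix_det M s)

theorem det_one_add_smul_eq_sum (c : R) (M : Matrix n n R) :
    det (1 + c • M) = ∑ s : Finset n, c ^ #s * (M.submatrix (↑) (↑) : Matrix s s R).det := by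
  rw [det_one_add_eq_sum_det_submatrix]
  refine Finset.sum_congr rfl fun s _ ↦ ?_
  rw [← Fintype.card_coe s, ← det_smul]
  rfl

omit [Fintype n] in
theorem det_submatrix_submatrix_map {m : Type*} [DecidableEq m] (M : Matrix n n R) (e : m ↪ n)
    (s : Finset m) :
    ((M.submatrix e e).submatrix (↑) (↑) : Matrix s s R).det =
      (M.submatrix (↑) (↑) : Matrix (s.map e) (s.map e) R).det := by
  rw [← det_submatrix_equiv_self (s.equivMap e)]
  rfl

end Matrix

theorem IsDeterminantal.sum_mul_sum_powerset_inter {μ : Finset α → ℝ} {K : Matrix α α ℝ}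
    (hdet : IsDeterminantal μ K) (A : Finset α) (f : Finset α → ℝ) :
    ∑ T, μ T * ∑ S ∈ (T ∩ A).powerset, f S = ∑ S ∈ A.powerset, f S * detSub K S := by
  have hpow (T : Finset α) : (T ∩ A).powerset = {S ∈ A.powerset | S ⊆ T} := by
    ext S
    simp only [mem_powerset, mem_filter, subset_inter_iff, and_comm]
  calc ∑ T, μ T * ∑ S ∈ (T ∩ A).powerset, f S
      = ∑ T, ∑ S ∈ A.powerset, f S * if S ⊆ T then μ T else 0 := by
        refine sum_congr rfl fun T _ ↦ ?_
        rw [hpow, sum_filter, mul_sum]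
        refine sum_congr rfl fun S _ ↦ ?_
        split_ifs <;> ring
    _ = ∑ S ∈ A.powerset, f S * detSub K S := by
        rw [sum_comm]
        exact sum_congr rfl fun S _ ↦ by rw [← mul_sum, hdet S]

theorem generating_function_det_general
    (μ : Finset α → ℝ) (K : Matrix α α ℝ)
    (hdet : IsDeterminantal μ K) :
    ∀ (A : Finset α) (z : ℝ),
      (∑ T : Finset α, μ T * z ^ (T ∩ A).card) =
        Matrix.det
          (z • (K.submatrix (fun i : {x : α // x ∈ A} => (i : α))
              (fun j : {x : α // x ∈ A} => (j : α)))
            + 1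
            - K.submatrix (fun i : {x : α // x ∈ A} => (i : α))
              (fun j : {x : α // x ∈ A} => (j : α))) := by
  intro A z
  set KA := K.submatrix (fun i : {x : α // x ∈ A} => (i : α))
    (fun j : {x : α // x ∈ A} => (j : α))
  have hmat : z • KA + 1 - KA = 1 + (z - 1) • KA := by
    rw [sub_smul, one_smul]
    abel
  calc ∑ T, μ T * z ^ #(T ∩ A)
      = ∑ T, μ T * ∑ S ∈ (T ∩ A).powerset, (z - 1) ^ #S :=
        sum_congr rfl fun T _ ↦ by rw [pow_card_eq_sum_powerset]
    _ = ∑ S ∈ A.powerset, (z - 1) ^ #S * detSub K S := hdet.sum_mul_sum_powerset_inter A _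
    _ = ∑ s : Finset A, (z - 1) ^ #s * (KA.submatrix (↑) (↑) : Matrix s s ℝ).det := by
        rw [sum_powerset_eq_sum_map_subtype]
        refine sum_congr rfl fun s _ ↦ ?_
        rw [card_map]
        exact congrArg _ (Matrix.det_submatrix_submatrix_map K (.subtype _) s).symm
    _ = (z • KA + 1 - KA).det := by
        rw [hmat, Matrix.det_one_add_smul_eq_sum]

/-- Probability generating function of the number of points in `A`. -/
theorem generating_function_det
    (μ : Finset α → ℝ) (K : Matrix α α ℝ)
    (hprob : IsProbMeasure μ) (hdet : IsDeterminantal μ K) :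
    ∀ (A : Finset α) (z : ℝ),
      (∑ T : Finset α, μ T * z ^ (T ∩ A).card) =
        Matrix.det
          (z • (K.submatrix (fun i : {x : α // x ∈ A} => (i : α))
              (fun j : {x : α // x ∈ A} => (j : α)))
            + 1
            - K.submatrix (fun i : {x : α // x ∈ A} => (i : α))
              (fun j : {x : α // x ∈ A} => (j : α))) :=
  generating_function_det_general μ K hdet
end

section
/- Let Ω be a finite set and let μ be a determinantal probability measure on the subsets of Ω with kernel K. Then for any distinct points x₁,…,x_k ∈ Ω, the fully centered correlation satisfies E_μ[ ∏_{i=1}^k ( 1_{x_i∈𝒯} − K(x_i,x_i) ) ] = det(M), where M is the k×k matrix with entries M_{ij} = K(x_i,x_j) for i ≠ j and M_{ii} = 0 on the diagonal. -/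
/-!
Expanding the product, `∏ᵢ (1_{xᵢ∈𝒯} − K(xᵢ,xᵢ))` is a sum over `s ⊆ {1,…,k}` of the indicators
of `{xᵢ : i ∈ s} ⊆ 𝒯` weighted by `∏_{i ∉ s} (−K(xᵢ,xᵢ))`, so its expectation is
`∑ₛ det K_{x(s)} ∏_{i ∉ s} (−K(xᵢ,xᵢ))`. Expanding `det (K_x + diag(−K(xᵢ,xᵢ)))` row by row
gives the same sum, and that matrix is `M`.
-/

open Finset

variable {α : Type*} [Fintype α] [DecidableEq α]

namespace Matrix

variable {n R : Type*} [Fintype n] [DecidableEq n] [CommRing R]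

theorem det_piecewise_row_diagonal (A : Matrix n n R) (d : n → R) (s : Finset n) :
    det (of (s.piecewise A.row (diagonal d).row)) =
      (A.submatrix (↑) (↑) : Matrix s s R).det * ∏ i ∈ sᶜ, d i := by
  have hrow : of (s.piecewise A.row (diagonal d).row) =
      of fun i j => (if i ∈ sᶜ then d i else 1) * of (s.piecewise A.row (1 : Matrix n n R).row) i j := by
    ext i j
    by_cases hi : i ∈ s <;> simp [hi, diagonal_apply, one_apply]
  rw [hrow, det_mul_column, det_piecewise_one_eq_submatrix_det, mul_comm, Fintype.prod_ite_mem]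

theorem det_add_diagonal (A : Matrix n n R) (d : n → R) :
    det (A + diagonal d) =
      ∑ s : Finset n, (A.submatrix (↑) (↑) : Matrix s s R).det * ∏ i ∈ sᶜ, d i :=
  (detRowAlternating.toMultilinearMap.map_add_univ A.row (diagonal d).row).trans
    (sum_congr rfl fun s _ => det_piecewise_row_diagonal A d s)

end Matrix

section Expansion

variable {ι β R : Type*} [Fintype ι] [DecidableEq ι] [DecidableEq β] [CommRing R]

theorem prod_boole_sub_eq_sum (f : ι → β) (T : Finset β) (c : ι → R) :
    ∏ i, ((if f i ∈ T then (1 : R) else 0) - c i) =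
      ∑ s : Finset ι, (if s.image f ⊆ T then (1 : R) else 0) * ∏ i ∈ sᶜ, -c i := by
  simp [sub_eq_add_neg, Fintype.prod_add, prod_boole, image_subset_iff]

theorem sum_mul_prod_boole_sub_eq_sum [Fintype β] (μ : Finset β → R) (f : ι → β) (c : ι → R) :
    ∑ T : Finset β, μ T * ∏ i, ((if f i ∈ T then (1 : R) else 0) - c i) =
      ∑ s : Finset ι, (∑ T : Finset β, if s.image f ⊆ T then μ T else 0) * ∏ i ∈ sᶜ, -c i := by
  simp only [prod_boole_sub_eq_sum, mul_sum, sum_mul, ← mul_assoc, mul_boole]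
  exact sum_comm

end Expansion

theorem detSub_image {ι β : Type*} [DecidableEq ι] [DecidableEq β] (K : Matrix β β ℝ) {x : ι → β}
    (hx : Function.Injective x) (s : Finset ι) :
    detSub K (s.image x) = ((K.submatrix x x).submatrix (↑) (↑) : Matrix s s ℝ).det := by
  let e : s ≃ s.image x := (Equiv.Set.image x s hx).trans (Equiv.setCongr coe_image.symm)
  rw [detSub, ← Matrix.det_submatrix_equiv_self e]
  rfl

theorem centered_correlation_det_general
    (μ : Finset α → ℝ) (K : Matrix α α ℝ)
    (hdet : IsDeterminantal μ K) :
    ∀ (k : ℕ) (x : Fin k → α), Function.Injective x →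
      (∑ T : Finset α,
          μ T * ∏ i : Fin k, ((if x i ∈ T then (1 : ℝ) else 0) - K (x i) (x i)))
        = Matrix.det (Matrix.of fun i j : Fin k =>
            if i = j then 0 else K (x i) (x j)) := by
  intro k x hx
  have hM : (Matrix.of fun i j : Fin k => if i = j then 0 else K (x i) (x j)) =
      K.submatrix x x + Matrix.diagonal fun i => -K (x i) (x i) := by
    ext i j
    by_cases h : i = j <;> simp [h]
  rw [sum_mul_prod_boole_sub_eq_sum, hM, Matrix.det_add_diagonal]
  exact sum_congr rfl fun s _ => by rw [hdet, detSub_image K hx]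

/-- Fully centered correlations equal the determinant of the
kernel matrix with zeroed diagonal. -/
theorem centered_correlation_det
    (μ : Finset α → ℝ) (K : Matrix α α ℝ)
    (hprob : IsProbMeasure μ) (hdet : IsDeterminantal μ K) :
    ∀ (k : ℕ) (x : Fin k → α), Function.Injective x →
      (∑ T : Finset α,
          μ T * ∏ i : Fin k, ((if x i ∈ T then (1 : ℝ) else 0) - K (x i) (x i)))
        = Matrix.det (Matrix.of fun i j : Fin k =>
            if i = j then 0 else K (x i) (x j)) :=
  centered_correlation_det_general μ K hdet
end
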